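/- Define ĝ : ℝ → ℝ by ĝ(θ) = (4/(3π)) · (θ(π − θ) + (π/2 − θ)·sin θ·cos θ + 2·sin²θ). Then ĝ(π − θ) = ĝ(θ) for all θ ∈ ℝ, and for every θ ∈ [0, π] one has 0 ≤ ĝ(θ) ≤ π/3 + 8/(3π), with the maximum value π/3 + 8/(3π) attained at θ = π/2. -/
import Mathlib


open Real

/-- The explicit solution `ĝ(θ) = (4/(3π))(θ(π−θ) + (π/2−θ) sin θ cos θ + 2 sin²θ)` of
equation (1.11)/(4.6). -/
noncomputable def ghat (θ : ℝ) : ℝ :=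
  4 / (3 * π) * (θ * (π - θ) + (π / 2 - θ) * sin θ * cos θ + 2 * sin θ ^ 2)

lemma ghat_sub (u : ℝ) :
    ghat (π / 2 - u) = 4 / (3 * π) * (π ^ 2 / 4 - u ^ 2 + u * sin u * cos u + 2 * cos u ^ 2) := by
  unfold ghat
  rw [Real.sin_pi_div_two_sub, Real.cos_pi_div_two_sub]
  ring

lemma mul_sin_nonneg {u : ℝ} (h : |u| ≤ π / 2) : 0 ≤ u * sin u := by
  rcases le_or_gt 0 u with hu | hu
  · exact mul_nonneg hu (Real.sin_nonneg_of_nonneg_of_le_pi hu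
      (by linarith [abs_le.mp h, Real.pi_pos]))
  · have : sin u ≤ 0 := by
      have := Real.sin_nonneg_of_nonneg_of_le_pi (x := -u) (by linarith)
        (by have := abs_le.mp h; linarith [Real.pi_pos])
      rw [Real.sin_neg] at this; linarith
    nlinarith [mul_nonneg (neg_nonneg.mpr hu.le) (neg_nonneg.mpr this)]

lemma mul_sin_le_sq (u : ℝ) : u * sin u ≤ u ^ 2 := by
  rcases le_or_gt 0 u with hu | hu
  · nlinarith [Real.sin_le hu]
  · have h1 : sin (-u) ≤ -u := Real.sin_le (by linarith)
    rw [Real.sin_neg] at h1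
    nlinarith

/-- Symmetry, nonnegativity and boundedness of `ĝ`, used in Lemma 4.6 and
Proposition 1.3: `ĝ(π − θ) = ĝ(θ)` for all `θ`, `0 ≤ ĝ(θ) ≤ π/3 + 8/(3π)` on `[0, π]`,
with the maximum attained at `θ = π/2`. -/
theorem ghat_symm_bounds :
    (∀ θ : ℝ, ghat (π - θ) = ghat θ) ∧
    (∀ θ ∈ Set.Icc (0 : ℝ) π, 0 ≤ ghat θ ∧ ghat θ ≤ π / 3 + 8 / (3 * π)) ∧
    ghat (π / 2) = π / 3 + 8 / (3 * π) := by
  have hπ : (0 : ℝ) < π := Real.pi_pos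
  have hval : ghat (π / 2) = π / 3 + 8 / (3 * π) := by
    have := ghat_sub 0
    simp only [sub_zero, Real.sin_zero, Real.cos_zero] at this
    rw [this]; field_simp; ring
  refine ⟨fun θ => ?_, fun θ hθ => ?_, hval⟩
  · unfold ghat
    rw [Real.sin_pi_sub, Real.cos_pi_sub]
    ring
  · obtain ⟨h0, h1⟩ := hθ
    obtain ⟨u, hu⟩ : ∃ u : ℝ, u = π / 2 - θ := ⟨_, rfl⟩
    have hθu : θ = π / 2 - u := by rw [hu]; ring
    have habs : |u| ≤ π / 2 := abs_le.mpr ⟨by rw [hu]; linarith, by rw [hu]; linarith⟩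
    have hus : 0 ≤ u * sin u := mul_sin_nonneg habs
    have hcos : 0 ≤ cos u := Real.cos_nonneg_of_mem_Icc
      ⟨by linarith [abs_le.mp habs], (abs_le.mp habs).2⟩
    have hcos1 : cos u ≤ 1 := Real.cos_le_one u
    have husq : u ^ 2 ≤ π ^ 2 / 4 := by
      have := abs_le.mp habs
      nlinarith
    have hkey : ghat θ = 4 / (3 * π) *
        (π ^ 2 / 4 - u ^ 2 + u * sin u * cos u + 2 * cos u ^ 2) := by
      rw [hθu, ghat_sub]
    have hc : (0 : ℝ) < 4 / (3 * π) := by positivity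
    constructor
    · rw [hkey]
      have h6 : 0 ≤ u * sin u * cos u := mul_nonneg hus hcos
      have hin : 0 ≤ π ^ 2 / 4 - u ^ 2 + u * sin u * cos u + 2 * cos u ^ 2 := by
        nlinarith [sq_nonneg (cos u)]
      exact mul_nonneg hc.le hin
    · rw [hkey]
      have h2 : u * sin u * cos u ≤ u ^ 2 := by
        calc u * sin u * cos u ≤ u * sin u * 1 := by nlinarith
        _ ≤ u ^ 2 := by rw [mul_one]; exact mul_sin_le_sq u
      have h3 : cos u ^ 2 ≤ 1 := by nlinarith
      have h4 : π ^ 2 / 4 - u ^ 2 + u * sin u * cos u + 2 * cos u ^ 2 ≤ π ^ 2 / 4 + 2 := by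
        linarith
      have h5 : 4 / (3 * π) * (π ^ 2 / 4 + 2) = π / 3 + 8 / (3 * π) := by
        field_simp; ring
      calc 4 / (3 * π) * (π ^ 2 / 4 - u ^ 2 + u * sin u * cos u + 2 * cos u ^ 2)
          ≤ 4 / (3 * π) * (π ^ 2 / 4 + 2) := by
            exact mul_le_mul_of_nonneg_left h4 hc.le
        _ = π / 3 + 8 / (3 * π) := h5
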